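/- arXiv:2003.00578 — 6 statements merged into one kernel-verified Lean document; each statement's English description precedes it below -/
import Mathlib

section
/- Let R be a type, let G := (Fin k → ZMod 2) be the space of k-bit strings serving as both message and ciphertext space, and let Enc : R → G → G and Dec : G → G satisfy Dec (Enc r m) = m for all r : R and m : G (perfect correctness). Define T1 : R × G × G → R × G × G by T1 (r, m, y) = (r, m, y + Enc r m) (type-1 encryption), SW (r, m, c) = (r, c, m) (register swap), and T2 (r, c, z) = (r, c, z + Dec c) (type-1 decryption). Then for all r : R and m : G, (T2 ∘ SW ∘ T1) (r, m, 0) = (r, Enc r m, 0). -/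
/-- Type-1 encryption operator: `(r, m, y) ↦ (r, m, y ⊕ Enc r m)`. -/
def T1 {R : Type*} {k : ℕ} (Enc : R → (Fin k → ZMod 2) → (Fin k → ZMod 2))
    (p : R × (Fin k → ZMod 2) × (Fin k → ZMod 2)) :
    R × (Fin k → ZMod 2) × (Fin k → ZMod 2) :=
  (p.1, p.2.1, p.2.2 + Enc p.1 p.2.1)

/-- Register swap: `(r, m, c) ↦ (r, c, m)`. -/
def SW {R : Type*} {k : ℕ} (p : R × (Fin k → ZMod 2) × (Fin k → ZMod 2)) :
    R × (Fin k → ZMod 2) × (Fin k → ZMod 2) :=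
  (p.1, p.2.2, p.2.1)

/-- Type-1 decryption operator: `(r, c, z) ↦ (r, c, z ⊕ Dec c)`. -/
def T2 {R : Type*} {k : ℕ} (Dec : (Fin k → ZMod 2) → (Fin k → ZMod 2))
    (p : R × (Fin k → ZMod 2) × (Fin k → ZMod 2)) :
    R × (Fin k → ZMod 2) × (Fin k → ZMod 2) :=
  (p.1, p.2.1, p.2.2 + Dec p.2.1)

theorem T2_comp_SW_comp_T1_apply {R : Type*} {k : ℕ}
    (Enc : R → (Fin k → ZMod 2) → (Fin k → ZMod 2))
    (Dec : (Fin k → ZMod 2) → (Fin k → ZMod 2)) (r : R) (m y : Fin k → ZMod 2) :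
    (T2 Dec ∘ SW ∘ T1 Enc) (r, m, y) = (r, y + Enc r m, m + Dec (y + Enc r m)) :=
  rfl

/-- **Correctness of the canonical type-2 encryption circuit (perfectly correct case).**
Composing type-1 encryption, a swap, and type-1 decryption maps `(r, m, 0)` to
`(r, Enc r m, 0)`. -/
theorem type2_circuit_correct {R : Type*} {k : ℕ}
    (Enc : R → (Fin k → ZMod 2) → (Fin k → ZMod 2))
    (Dec : (Fin k → ZMod 2) → (Fin k → ZMod 2))
    (hcorr : ∀ (r : R) (m : Fin k → ZMod 2), Dec (Enc r m) = m) :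
    ∀ (r : R) (m : Fin k → ZMod 2),
      (T2 Dec ∘ SW ∘ T1 Enc) (r, m, 0) = (r, Enc r m, 0) := by
  intro r m
  rw [T2_comp_SW_comp_T1_apply, zero_add, hcorr, ZModModule.add_self]
end

section
/- Let R, M, C be finite types, let pad : M ↪ C be an injective map, let Enc : R → M → C, and suppose there exists a recovery function Rec : R → C → M such that Rec r (Enc r m) = m for all r : R and m : M (the scheme is recoverable). Then for every r : R the map Enc r is injective, and there exists a linear isometry equivalence (unitary) U : EuclideanSpace ℂ (R × C) ≃ₗᵢ EuclideanSpace ℂ (R × C) such that for all r : R and m : M, U maps the standard basis vector indexed by (r, pad m) to the standard basis vector indexed by (r, Enc r m). -/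
/-!
Recoverability makes every `Enc r` injective, so `pad m ↦ Enc r m` is a bijection between two
subsets of `C` of the same size and extends to a permutation of `C`. These permutations, taken
fibrewise over `R`, form a permutation of `R × C`, and permuting an orthonormal basis is unitary.
-/

open Function

theorem exists_perm_apply_eq_of_injective {M C : Type*} [Finite C] {f g : M → C}
    (hf : Injective f) (hg : Injective g) : ∃ σ : Equiv.Perm C, ∀ m, σ (f m) = g m := by
  classical
  refine ⟨((Equiv.ofInjective f hf).symm.trans (Equiv.ofInjective g hg)).extendSubtype,
    fun m => ?_⟩
  rw [Equiv.extendSubtype_apply_of_mem _ _ ⟨m, rfl⟩]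
  simp

theorem exists_linearIsometryEquiv_single_prod_eq {𝕜 R C : Type*} [RCLike 𝕜]
    [Fintype R] [Fintype C] [DecidableEq R] [DecidableEq C] (σ : R → Equiv.Perm C) :
    ∃ U : EuclideanSpace 𝕜 (R × C) ≃ₗᵢ[𝕜] EuclideanSpace 𝕜 (R × C),
      ∀ r c (v : 𝕜), U (EuclideanSpace.single (r, c) v) = EuclideanSpace.single (r, σ r c) v :=
  ⟨LinearIsometryEquiv.piLpCongrLeft 2 𝕜 𝕜 (Equiv.prodShear (Equiv.refl R) σ),
    fun r c v => EuclideanSpace.piLpCongrLeft_single _ (r, c) v⟩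

theorem type2_operator_of_recoverable_general
    {R M C : Type*} [Fintype R] [Fintype C]
    [DecidableEq R] [DecidableEq C]
    (pad : M ↪ C) (Enc : R → M → C)
    (hrec : ∃ Rec : R → C → M, ∀ (r : R) (m : M), Rec r (Enc r m) = m) :
    (∀ r : R, Function.Injective (Enc r)) ∧
    ∃ U : EuclideanSpace ℂ (R × C) ≃ₗᵢ[ℂ] EuclideanSpace ℂ (R × C),
      ∀ (r : R) (m : M),
        U (EuclideanSpace.single (r, pad m) (1 : ℂ)) =
          EuclideanSpace.single (r, Enc r m) (1 : ℂ) := by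
  obtain ⟨Rec, hRec⟩ := hrec
  have hinj : ∀ r, Injective (Enc r) := fun r => LeftInverse.injective (hRec r)
  choose σ hσ using fun r => exists_perm_apply_eq_of_injective pad.injective (hinj r)
  obtain ⟨U, hU⟩ := exists_linearIsometryEquiv_single_prod_eq (𝕜 := ℂ) σ
  exact ⟨hinj, U, fun r m => by rw [hU, hσ]⟩

/-- **Type-2 encryption operator for recoverable PKE schemes.**
If there is a recovery function `Rec` with `Rec r (Enc r m) = m`, then `Enc r` is
injective for every `r` and there exists a unitary on `EuclideanSpace ℂ (R × C)`
mapping the basis state `|r, pad m⟩` to `|r, Enc r m⟩`. -/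
theorem type2_operator_of_recoverable
    {R M C : Type*} [Fintype R] [Fintype M] [Fintype C]
    [DecidableEq R] [DecidableEq M] [DecidableEq C]
    (pad : M ↪ C) (Enc : R → M → C)
    (hrec : ∃ Rec : R → C → M, ∀ (r : R) (m : M), Rec r (Enc r m) = m) :
    (∀ r : R, Function.Injective (Enc r)) ∧
    ∃ U : EuclideanSpace ℂ (R × C) ≃ₗᵢ[ℂ] EuclideanSpace ℂ (R × C),
      ∀ (r : R) (m : M),
        U (EuclideanSpace.single (r, pad m) (1 : ℂ)) =
          EuclideanSpace.single (r, Enc r m) (1 : ℂ) :=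
  type2_operator_of_recoverable_general pad Enc hrec
end

section
/- Let R be a type, let G := (Fin k → ZMod 2) serve as both message and ciphertext space, and let Enc : R → G → G admit a recovery function Rec : R → G → G with Rec r (Enc r m) = m for all r, m. Define T1 (r, m, y) = (r, m, y + Enc r m) (type-1 encryption), SW (r, m, c) = (r, c, m) (register swap), and T2' (r, c, z) = (r, c, z + Rec r c) (type-1 recovery). Then for all r : R and m : G, (T2' ∘ SW ∘ T1) (r, m, 0) = (r, Enc r m, 0). -/
/-- Type-1 recovery operator: `(r, c, z) ↦ (r, c, z ⊕ Rec r c)`. -/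
def T2' {R : Type*} {k : ℕ} (Rec : R → (Fin k → ZMod 2) → (Fin k → ZMod 2))
    (p : R × (Fin k → ZMod 2) × (Fin k → ZMod 2)) :
    R × (Fin k → ZMod 2) × (Fin k → ZMod 2) :=
  (p.1, p.2.1, p.2.2 + Rec p.1 p.2.1)

theorem T2'_comp_SW_comp_T1_apply {R : Type*} {k : ℕ}
    (Enc Rec : R → (Fin k → ZMod 2) → (Fin k → ZMod 2)) (r : R) (m y : Fin k → ZMod 2) :
    (T2' Rec ∘ SW ∘ T1 Enc) (r, m, y) = (r, y + Enc r m, m + Rec r (y + Enc r m)) :=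
  rfl

/-- **Correctness of the canonical type-2 encryption circuit (recoverable case).**
Composing type-1 encryption, a swap, and type-1 recovery maps `(r, m, 0)` to
`(r, Enc r m, 0)`. -/
theorem type2_circuit_correct_recoverable {R : Type*} {k : ℕ}
    (Enc : R → (Fin k → ZMod 2) → (Fin k → ZMod 2))
    (Rec : R → (Fin k → ZMod 2) → (Fin k → ZMod 2))
    (hrec : ∀ (r : R) (m : Fin k → ZMod 2), Rec r (Enc r m) = m) :
    ∀ (r : R) (m : Fin k → ZMod 2),
      (T2' Rec ∘ SW ∘ T1 Enc) (r, m, 0) = (r, Enc r m, 0) := by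
  intro r m
  rw [T2'_comp_SW_comp_T1_apply, zero_add, hrec, ZModModule.add_self]
end

section
/- For n ≥ 1 and any w : Fin n → ZMod 2, let v0 m := (Real.sqrt (2 ^ n))⁻¹ and v1 m := ((-1) ^ (∑ i, m i).val) / Real.sqrt (2 ^ n) in EuclideanSpace ℂ (Fin n → ZMod 2), and let Sʷ act by (Sʷ ψ) m := ψ (m + w). Then ‖⟪v0, Sʷ v0⟫‖ ^ 2 = 1 and ‖⟪v0, Sʷ v1⟫‖ ^ 2 = 0. -/
/-!
Pairing with the constant vector `v0` sums the coordinates, and that sum is invariant under the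
shift `S`. For `v0` the sum is `2ⁿ / √2ⁿ`, so `⟪v0, S v0⟫ = 1`; for `v1` it is, up to the factor
`1 / √2ⁿ`, the sum of the nontrivial character `m ↦ (-1) ^ ∑ mᵢ` of `(ZMod 2)ⁿ`, which vanishes.
-/

open scoped InnerProductSpace

def parityChar (ι R : Type*) [Fintype ι] [Ring R] : AddChar (ι → ZMod 2) R where
  toFun m := (-1) ^ (∑ i, m i).val
  map_zero_eq_one' := by simp
  map_add_eq_mul' a b := by
    rw [Pi.add_def, Finset.sum_add_distrib, ZMod.val_add, ← neg_one_pow_eq_pow_mod_two, pow_add]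

section parityChar

variable {ι R : Type*} [Fintype ι]

@[simp] lemma parityChar_apply [Ring R] (m : ι → ZMod 2) :
    parityChar ι R m = (-1) ^ (∑ i, m i).val := rfl

lemma parityChar_ne_zero [Nonempty ι] [Ring R] [CharZero R] : parityChar ι R ≠ 0 := by
  classical
  obtain ⟨i⟩ := ‹Nonempty ι›
  exact AddChar.ne_zero_iff.2 ⟨Pi.single i 1, by norm_num [ZMod.val_one]⟩

lemma sum_parityChar_eq_zero [DecidableEq ι] [Nonempty ι] [CommRing R] [IsDomain R] [CharZero R] :
    ∑ m, parityChar ι R m = 0 :=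
  AddChar.sum_eq_zero_iff_ne_zero.2 parityChar_ne_zero

end parityChar

lemma inner_eq_mul_sum_of_const_left {G : Type*} [Fintype G] (c : ℝ) {u : EuclideanSpace ℂ G}
    (hu : ∀ m, u m = c) (φ : EuclideanSpace ℂ G) : ⟪u, φ⟫_ℂ = c * ∑ m, φ m := by
  simp [PiLp.inner_apply, hu, Finset.mul_sum, mul_comm]

/-- **Quantum kernel of the attack against the canonical LWE scheme for q = 2.**
Projecting the XOR-shifted challenge states onto the uniform superposition yields
probability 1 for `v0 = H|0…0⟩` and probability 0 for `v1 = H|1…1⟩`. -/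
theorem lwe_attack_kernel (n : ℕ) (hn : 1 ≤ n) (w : Fin n → ZMod 2)
    (v0 v1 : EuclideanSpace ℂ (Fin n → ZMod 2))
    (hv0 : ∀ m : Fin n → ZMod 2, v0 m = (Real.sqrt (2 ^ n) : ℝ)⁻¹)
    (hv1 : ∀ m : Fin n → ZMod 2,
      v1 m = ((-1 : ℂ) ^ (∑ i, m i).val) / (Real.sqrt (2 ^ n) : ℝ))
    (S : EuclideanSpace ℂ (Fin n → ZMod 2) → EuclideanSpace ℂ (Fin n → ZMod 2))
    (hS : ∀ (ψ : EuclideanSpace ℂ (Fin n → ZMod 2)) (m : Fin n → ZMod 2),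
      S ψ m = ψ (m + w)) :
    ‖⟪v0, S v0⟫_ℂ‖ ^ 2 = 1 ∧ ‖⟪v0, S v1⟫_ℂ‖ ^ 2 = 0 := by
  have : Nonempty (Fin n) := ⟨⟨0, hn⟩⟩
  set r := Real.sqrt (2 ^ n)
  have sum_S (ψ : EuclideanSpace ℂ (Fin n → ZMod 2)) : ∑ m, S ψ m = ∑ m, ψ m := by
    simp_rw [hS]
    exact Equiv.sum_comp (Equiv.addRight w) ψ
  have h0 : ⟪v0, S v0⟫_ℂ = 1 := by
    have hr : r ^ 2 = 2 ^ n := Real.sq_sqrt (by positivity)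
    have hr0 : r ≠ 0 := (Real.sqrt_pos.2 (by positivity)).ne'
    rw [inner_eq_mul_sum_of_const_left _ hv0, sum_S]
    simp only [hv0, Finset.sum_const, Finset.card_univ, Fintype.card_pi, ZMod.card, Finset.prod_const,
      Fintype.card_fin, nsmul_eq_mul]
    norm_cast
    push_cast
    rw [← hr]
    field_simp
  have h1 : ⟪v0, S v1⟫_ℂ = 0 := by
    rw [inner_eq_mul_sum_of_const_left _ hv0, sum_S]
    simp_rw [hv1, ← Finset.sum_div, ← parityChar_apply, sum_parityChar_eq_zero]
    simp
  simp [h0, h1]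
end

section
/- For n ≥ 1, let v0 : EuclideanSpace ℂ (Fin n → ZMod 2) be v0 m := (Real.sqrt (2 ^ n))⁻¹, let Sᵏ act by (Sᵏ ψ) m := ψ (m + k) for k : Fin n → ZMod 2, and let δ₀ be the standard basis vector at the all-zero string. Then for every k : ‖⟪v0, Sᵏ v0⟫‖ ^ 2 = 1 and ‖⟪v0, δ₀⟫‖ ^ 2 = (2 : ℝ) ^ (-(n : ℤ)); consequently (1/2) * 1 + (1/2) * (1 - (2 : ℝ) ^ (-(n : ℤ))) ≥ 3/4. -/
open scoped InnerProductSpace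

theorem EuclideanSpace.norm_eq_one_of_forall_eq_inv_sqrt_card {𝕜 ι : Type*} [RCLike 𝕜]
    [Fintype ι] [Nonempty ι] {v : EuclideanSpace 𝕜 ι}
    (hv : ∀ i, v i = ((Real.sqrt (Fintype.card ι))⁻¹ : ℝ)) : ‖v‖ = 1 := by
  have hcard : (0 : ℝ) < Fintype.card ι := by exact_mod_cast Fintype.card_pos
  simp [EuclideanSpace.norm_eq, hv, inv_pow, Real.sq_sqrt hcard.le, hcard.ne']

theorem EuclideanSpace.norm_inner_single_one_right {𝕜 ι : Type*} [RCLike 𝕜] [Fintype ι]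
    [DecidableEq ι] (v : EuclideanSpace 𝕜 ι) (i : ι) :
    ‖⟪v, EuclideanSpace.single i (1 : 𝕜)⟫_𝕜‖ = ‖v i‖ := by
  simp [EuclideanSpace.inner_single_right]

theorem two_zpow_neg_le_half {n : ℕ} (hn : 1 ≤ n) : (2 : ℝ) ^ (-(n : ℤ)) ≤ 1 / 2 := by
  rw [one_div, ← zpow_neg_one]
  exact zpow_le_zpow_right₀ one_le_two (by omega)

/-- **Quantum kernel of the attack against ROLLO-II.**
One-time-pad XOR-shifts fix the uniform superposition, which overlaps with the
all-zero basis state only with probability `2 ^ (-n)`; hence the distinguisher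
wins the qIND-qCPA experiment with probability at least `3/4`. -/
theorem rollo_attack_kernel (n : ℕ) (hn : 1 ≤ n)
    (v0 : EuclideanSpace ℂ (Fin n → ZMod 2))
    (hv0 : ∀ m : Fin n → ZMod 2, v0 m = (Real.sqrt (2 ^ n) : ℝ)⁻¹)
    (S : (Fin n → ZMod 2) → EuclideanSpace ℂ (Fin n → ZMod 2) →
      EuclideanSpace ℂ (Fin n → ZMod 2))
    (hS : ∀ (k : Fin n → ZMod 2) (ψ : EuclideanSpace ℂ (Fin n → ZMod 2))
      (m : Fin n → ZMod 2), S k ψ m = ψ (m + k))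
    (δ₀ : EuclideanSpace ℂ (Fin n → ZMod 2))
    (hδ₀ : δ₀ = EuclideanSpace.single (0 : Fin n → ZMod 2) (1 : ℂ)) :
    (∀ k : Fin n → ZMod 2, ‖⟪v0, S k v0⟫_ℂ‖ ^ 2 = 1) ∧
    ‖⟪v0, δ₀⟫_ℂ‖ ^ 2 = (2 : ℝ) ^ (-(n : ℤ)) ∧
    (1 / 2 : ℝ) * 1 + (1 / 2) * (1 - (2 : ℝ) ^ (-(n : ℤ))) ≥ 3 / 4 := by
  have hcard : (Fintype.card (Fin n → ZMod 2) : ℝ) = 2 ^ n := by simp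
  have hunit : ‖v0‖ = 1 :=
    EuclideanSpace.norm_eq_one_of_forall_eq_inv_sqrt_card (by rw [hcard]; exact hv0)
  have hshift : ∀ k, S k v0 = v0 := fun k => by ext m; rw [hS, hv0, hv0]
  refine ⟨fun k => ?_, ?_, by linarith [two_zpow_neg_le_half hn]⟩
  · simp [hshift, inner_self_eq_norm_sq_to_K, hunit]
  · rw [hδ₀, EuclideanSpace.norm_inner_single_one_right, hv0, Complex.norm_real, norm_inv,
      Real.norm_of_nonneg (Real.sqrt_nonneg _), inv_pow, Real.sq_sqrt (by positivity),
      zpow_neg, zpow_natCast]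
end

section
/- Let R, M, Y, C be finite types, let F : M → Y be injective, let pad : M ↪ C be an injective map, let EncΣ : Y → R → C, and suppose there exists Rec : R → C → Y with Rec r (EncΣ y r) = y for all y : Y and r : R (Σ is recoverable). Define the transformed encryption Enc' : M → R → C by Enc' m r := EncΣ (F m) r. Then for every r : R the map m ↦ Enc' m r is injective, and there exists a linear isometry equivalence (unitary) U : EuclideanSpace ℂ (R × C) ≃ₗᵢ EuclideanSpace ℂ (R × C) such that for all r : R and m : M, U maps the standard basis vector indexed by (r, pad m) to the standard basis vector indexed by (r, Enc' m r). -/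
/-!
`Rec r` is a left inverse of `EncSig · r`, so each `m ↦ EncSig (F m) r` is injective. For each `r`
the embedding `pad` can then be carried onto it by a permutation of `C` (as `M` is finite); these
permutations assemble into a permutation of `R × C`, and permuting the standard basis is unitary.
-/

theorem Equiv.Perm.exists_prodShear_extending {R M C : Type*} [Finite M]
    {f : M → C} (hf : Function.Injective f) {g : R → M → C} (hg : ∀ r, Function.Injective (g r)) :
    ∃ P : Equiv.Perm (R × C), ∀ r m, P (r, f m) = (r, g r m) := by
  choose σ hσ using fun r => Equiv.Perm.exists_extending_pair f (g r) hf (hg r)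
  exact ⟨Equiv.prodShear (Equiv.refl R) σ, fun r m => by simp [Equiv.prodShear, hσ]⟩

theorem EuclideanSpace.exists_linearIsometryEquiv_single_prod {𝕜 R M C : Type*} [RCLike 𝕜]
    [Fintype R] [Finite M] [Fintype C] [DecidableEq R] [DecidableEq C]
    {pad : M → C} (hpad : Function.Injective pad) {Enc : M → R → C}
    (hEnc : ∀ r, Function.Injective (Enc · r)) (v : 𝕜) :
    ∃ U : EuclideanSpace 𝕜 (R × C) ≃ₗᵢ[𝕜] EuclideanSpace 𝕜 (R × C),
      ∀ r m, U (EuclideanSpace.single (r, pad m) v) = EuclideanSpace.single (r, Enc m r) v := by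
  obtain ⟨P, hP⟩ := Equiv.Perm.exists_prodShear_extending hpad hEnc
  exact ⟨LinearIsometryEquiv.piLpCongrLeft 2 𝕜 𝕜 P, fun r m => by
    rw [EuclideanSpace.piLpCongrLeft_single, hP]⟩

theorem transformed_scheme_isometric_general
    {R M Y C : Type*} [Fintype R] [Fintype M] [Fintype C]
    [DecidableEq R] [DecidableEq C]
    (F : M → Y) (hF : Function.Injective F)
    (pad : M ↪ C) (EncSig : Y → R → C)
    (hrec : ∃ Rec : R → C → Y, ∀ (y : Y) (r : R), Rec r (EncSig y r) = y) :
    (∀ r : R, Function.Injective (fun m : M => EncSig (F m) r)) ∧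
    ∃ U : EuclideanSpace ℂ (R × C) ≃ₗᵢ[ℂ] EuclideanSpace ℂ (R × C),
      ∀ (r : R) (m : M),
        U (EuclideanSpace.single (r, pad m) (1 : ℂ)) =
          EuclideanSpace.single (r, EncSig (F m) r) (1 : ℂ) := by
  obtain ⟨Rec, hRec⟩ := hrec
  have hinj (r : R) : Function.Injective (fun m : M => EncSig (F m) r) :=
    (Function.LeftInverse.injective (f := (EncSig · r)) (hRec · r)).comp hF
  exact ⟨hinj, EuclideanSpace.exists_linearIsometryEquiv_single_prod pad.injective hinj 1⟩

/-- **The transformed scheme of Theorem 7 is (efficiently) isometric.**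
If `Σ` is recoverable and `F` is injective, then the transformed encryption
`Enc' m r := EncSig (F m) r` is injective in the message for every randomness,
and admits a type-2 encryption unitary on `EuclideanSpace ℂ (R × C)`. -/
theorem transformed_scheme_isometric
    {R M Y C : Type*} [Fintype R] [Fintype M] [Fintype Y] [Fintype C]
    [DecidableEq R] [DecidableEq M] [DecidableEq Y] [DecidableEq C]
    (F : M → Y) (hF : Function.Injective F)
    (pad : M ↪ C) (EncSig : Y → R → C)
    (hrec : ∃ Rec : R → C → Y, ∀ (y : Y) (r : R), Rec r (EncSig y r) = y) :
    (∀ r : R, Function.Injective (fun m : M => EncSig (F m) r)) ∧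
    ∃ U : EuclideanSpace ℂ (R × C) ≃ₗᵢ[ℂ] EuclideanSpace ℂ (R × C),
      ∀ (r : R) (m : M),
        U (EuclideanSpace.single (r, pad m) (1 : ℂ)) =
          EuclideanSpace.single (r, EncSig (F m) r) (1 : ℂ) :=
  transformed_scheme_isometric_general F hF pad EncSig hrec
end
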